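/- The weighted-configuration identity holds for g = 7 and w = 1: for any set S of 7 distinct real numbers, the sum over all weighted configurations of S with total weight 1 of their evaluations is zero. -/

import Mathlib

/-!
With total weight `1`, a weighted configuration is an ordered set partition of `S` with one
marked block, and `P₀ = 1`, `P₁(t) = t(t-1)/2`. Permuting the blocks moves the marked block to
the front, which cancels the factor `1/r`; for a fixed marked block `T` what remains is the
alternating count `∑ₖ (-1)ᵏ #{ordered partitions of S \ T into k blocks} = (-1)^|S \ T|`.
The sum thus becomes `±∑_{T ⊆ S} (-1)^|T| P₁(t_T)`, an alternating sum over subsets of a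
polynomial of degree `2` in the subset sum, and such a sum vanishes once `|S| > 2`.
-/

open Finset Polynomial

/-- The unsigned Stirling number of the first kind `[n, k]`, defined as the coefficient of
`x^k` in the ascending factorial `x (x+1) ⋯ (x+n-1)`. -/
noncomputable def stirling1 (n k : ℕ) : ℕ := (ascPochhammer ℕ n).coeff k

/-- `IsStirlingPoly P` says that for every `w`, `P w` is the (unique) real polynomial of degree
at most `2w` with `(P w).eval n = [n, n-w]` (unsigned Stirling number of the first kind) for
every integer `n ≥ w`; i.e. `P w` plays the role of `P_w` from the paper. -/
def IsStirlingPoly (P : ℕ → Polynomial ℝ) : Prop :=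
  ∀ w : ℕ, (P w).natDegree ≤ 2 * w ∧
    ∀ n : ℕ, w ≤ n → (P w).eval (n : ℝ) = (stirling1 n (n - w) : ℝ)

open scoped Classical in
/-- The sum, over all weighted configurations of the finite set `S` with total weight `w`, of
their evaluations.  A weighted configuration is recorded as a length `r` together with an
`r`-tuple `f`, where `(f i).1 = Sᵢ` are the (nonempty, pairwise disjoint, covering `S`) parts
of the configuration and `(f i).2 = wᵢ` are their weights, `∑ i, wᵢ = w`.  Its evaluation is
`(-1)^r · (1/r) · ∏ i, P_{wᵢ}(tᵢ)` where `tᵢ = ∑ c ∈ Sᵢ, c`.  (Since the parts are nonempty and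
pairwise disjoint, `r ≤ S.card`, and each weight is at most `w`, so every weighted
configuration occurs exactly once in the sum below.) -/
noncomputable def weightedConfigSum (P : ℕ → Polynomial ℝ) (S : Finset ℝ) (w : ℕ) : ℝ :=
  ∑ r ∈ Finset.range (S.card + 1),
    ∑ f ∈ (Fintype.piFinset fun _ : Fin r => S.powerset ×ˢ Finset.range (w + 1)).filter
        (fun f => (∀ i, ((f i).1).Nonempty) ∧
          (∀ i j, i ≠ j → Disjoint (f i).1 (f j).1) ∧
          (Finset.univ.biUnion fun i => (f i).1) = S ∧
          ∑ i, (f i).2 = w),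
      (-1 : ℝ) ^ r * (1 / (r : ℝ)) * ∏ i, (P (f i).2).eval (∑ c ∈ (f i).1, c)

open Function

theorem stirling1_self (n : ℕ) : stirling1 n n = 1 := by
  have := (monic_ascPochhammer ℕ n).coeff_natDegree
  rwa [ascPochhammer_natDegree] at this

theorem stirling1_succ_self (n : ℕ) : stirling1 (n + 1) n = (n + 1).choose 2 := by
  induction n with
  | zero => simp [stirling1]
  | succ n ih =>
    rw [stirling1, ascPochhammer_succ_right, mul_add, coeff_add, coeff_mul_X, ← stirling1, ih,
      ← C_eq_natCast, coeff_mul_C, ← stirling1, stirling1_self, Nat.choose_succ_succ' (n + 1)]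
    simp [add_comm]

theorem IsStirlingPoly.eq_of_eval_eq {P : ℕ → ℝ[X]} (hP : IsStirlingPoly P) {w : ℕ} {p : ℝ[X]}
    (hp : ∀ n : ℕ, w ≤ n → p.eval (n : ℝ) = stirling1 n (n - w)) : P w = p := by
  refine eq_of_infinite_eval_eq _ _ (((Set.Ici_infinite w).image Nat.cast_injective.injOn).mono ?_)
  rintro _ ⟨n, hn, rfl⟩
  exact ((hP w).2 n hn).trans (hp n hn).symm

theorem IsStirlingPoly.zero_eq {P : ℕ → ℝ[X]} (hP : IsStirlingPoly P) : P 0 = 1 :=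
  hP.eq_of_eval_eq fun n _ => by simp [stirling1_self]

theorem IsStirlingPoly.one_eq {P : ℕ → ℝ[X]} (hP : IsStirlingPoly P) :
    P 1 = C 2⁻¹ * (X ^ 2 - X) := hP.eq_of_eval_eq fun n hn => by
  obtain ⟨m, rfl⟩ := Nat.exists_eq_add_of_le' hn
  simp only [Nat.add_sub_cancel, stirling1_succ_self, Nat.cast_choose_two, eval_mul, eval_C,
    eval_sub, eval_pow, eval_X]
  push_cast
  ring

section AlternatingSums

variable {ι R : Type*} [DecidableEq ι] [CommRing R]

theorem neg_one_pow_card_sdiff {s t : Finset ι} (h : t ⊆ s) :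
    (-1 : R) ^ #(s \ t) = (-1) ^ #s * (-1) ^ #t := by
  rw [← card_sdiff_add_card_eq_card h, pow_add, mul_assoc, ← mul_pow, neg_one_mul, neg_neg,
    one_pow, mul_one]

theorem sum_powerset_neg_one_pow_card_mul_sum_pow (s : Finset ι) (x : ι → R) {m : ℕ}
    (hm : m < #s) : ∑ t ∈ s.powerset, (-1) ^ #t * (∑ i ∈ t, x i) ^ m = 0 := by
  induction s using Finset.induction_on generalizing m with
  | empty => simp at hm
  | insert a s ha ih =>
    rw [card_insert_of_notMem ha] at hm
    have hinsert (t) (ht : t ∈ s.powerset) :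
        (-1 : R) ^ #(insert a t) * (∑ i ∈ insert a t, x i) ^ m =
          -((-1) ^ #t * (∑ i ∈ t, x i) ^ m) -
          ∑ j ∈ range m, (m.choose j * x a ^ (m - j)) * ((-1) ^ #t * (∑ i ∈ t, x i) ^ j) := by
      have hat : a ∉ t := fun h => ha (mem_powerset.mp ht h)
      rw [card_insert_of_notMem hat, sum_insert hat, add_comm (x a), add_pow, sum_range_succ,
        Nat.choose_self, Nat.sub_self, mul_add, mul_sum, sub_eq_add_neg, ← sum_neg_distrib,
        add_comm]
      congr 1
      · ring
      · exact sum_congr rfl fun j _ => by ring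
    have hlower (j) (hj : j ∈ range m) : ∑ t ∈ s.powerset,
        (m.choose j * x a ^ (m - j)) * ((-1 : R) ^ #t * (∑ i ∈ t, x i) ^ j) = 0 := by
      rw [← mul_sum, ih (by rw [mem_range] at hj; omega), mul_zero]
    rw [sum_powerset_insert ha, sum_congr rfl hinsert, sum_sub_distrib, sum_neg_distrib, sum_comm,
      sum_eq_zero hlower]
    abel

theorem sum_powerset_neg_one_pow_card_mul_eval_sum (s : Finset ι) (x : ι → R) {p : R[X]}
    (hp : p.natDegree < #s) : ∑ t ∈ s.powerset, (-1) ^ #t * p.eval (∑ i ∈ t, x i) = 0 := by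
  simp only [eval_eq_sum_range, mul_sum]
  rw [sum_comm]
  refine sum_eq_zero fun j hj => ?_
  simp only [mul_left_comm _ (p.coeff j), ← mul_sum]
  rw [sum_powerset_neg_one_pow_card_mul_sum_pow s x (by rw [mem_range] at hj; omega), mul_zero]

end AlternatingSums

section OrderedPartitions

variable {α : Type*}

open scoped Classical in
noncomputable def orderedPartitions (S : Finset α) (r : ℕ) : Finset (Fin r → Finset α) :=
  {g ∈ Fintype.piFinset fun _ => S.powerset |
    (∀ i, (g i).Nonempty) ∧ Pairwise (Disjoint on g) ∧ ∀ x ∈ S, ∃ i, x ∈ g i}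

variable {S : Finset α} {r k : ℕ}

theorem mem_orderedPartitions {g : Fin r → Finset α} :
    g ∈ orderedPartitions S r ↔
      (∀ i, g i ⊆ S) ∧ (∀ i, (g i).Nonempty) ∧ Pairwise (Disjoint on g) ∧
        ∀ x ∈ S, ∃ i, x ∈ g i := by
  simp [orderedPartitions]

theorem comp_perm_mem_orderedPartitions {g : Fin r → Finset α} (σ : Equiv.Perm (Fin r))
    (hg : g ∈ orderedPartitions S r) : g ∘ σ ∈ orderedPartitions S r := by
  obtain ⟨hsub, hne, hdisj, hcover⟩ := mem_orderedPartitions.mp hg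
  refine mem_orderedPartitions.mpr ⟨fun i => hsub _, fun i => hne _,
    hdisj.comp_of_injective σ.injective, fun x hx => ?_⟩
  obtain ⟨i, hi⟩ := hcover x hx
  exact ⟨σ.symm i, by simpa using hi⟩

theorem sum_orderedPartitions_comp_perm {M : Type*} [AddCommMonoid M] (σ : Equiv.Perm (Fin r))
    (F : (Fin r → Finset α) → M) :
    ∑ g ∈ orderedPartitions S r, F (g ∘ σ) = ∑ g ∈ orderedPartitions S r, F g :=
  sum_nbij' (· ∘ σ) (· ∘ σ.symm) (fun _ hg => comp_perm_mem_orderedPartitions σ hg)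
    (fun _ hg => comp_perm_mem_orderedPartitions σ.symm hg) (fun _ _ => by ext1; simp)
    (fun _ _ => by ext1; simp) (fun _ _ => rfl)

variable [DecidableEq α]

theorem card_orderedPartitions_zero : #(orderedPartitions S 0) = if S = ∅ then 1 else 0 := by
  split_ifs with hS
  · subst hS
    rw [card_eq_one]
    exact ⟨Fin.elim0, by ext g; simp [mem_orderedPartitions, Subsingleton.elim g Fin.elim0]⟩
  · obtain ⟨x, hx⟩ := nonempty_iff_ne_empty.mpr hS
    rw [card_eq_zero, eq_empty_iff_forall_notMem]
    intro g hg
    obtain ⟨i, -⟩ := (mem_orderedPartitions.mp hg).2.2.2 x hx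
    exact i.elim0

theorem cons_mem_orderedPartitions_succ {T : Finset α} {g : Fin k → Finset α} :
    Fin.cons T g ∈ orderedPartitions S (k + 1) ↔
      T ⊆ S ∧ T ≠ ∅ ∧ g ∈ orderedPartitions (S \ T) k := by
  simp only [mem_orderedPartitions, Fin.forall_fin_succ, Fin.exists_fin_succ, Fin.cons_zero,
    Fin.cons_succ, pairwise_fin_succ_iff, onFun, subset_sdiff, nonempty_iff_ne_empty,
    mem_sdiff, and_imp, forall_and, disjoint_comm (a := T)]
  constructor
  · rintro ⟨⟨hT, hsub⟩, ⟨hTne, hne⟩, ⟨hdisj, -, hpair⟩, hcover⟩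
    exact ⟨hT, hTne, ⟨hsub, hdisj⟩, hne, hpair, fun x hx hxT => (hcover x hx).resolve_left hxT⟩
  · rintro ⟨hT, hTne, ⟨hsub, hdisj⟩, hne, hpair, hcover⟩
    exact ⟨⟨hT, hsub⟩, ⟨hTne, hne⟩, ⟨hdisj, hdisj, hpair⟩,
      fun x hx => or_iff_not_imp_left.mpr (hcover x hx)⟩

theorem sum_orderedPartitions_succ {M : Type*} [AddCommMonoid M]
    (F : (Fin (k + 1) → Finset α) → M) :
    ∑ g ∈ orderedPartitions S (k + 1), F g =
      ∑ T ∈ S.powerset.erase ∅, ∑ g ∈ orderedPartitions (S \ T) k, F (Fin.cons T g) := by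
  rw [sum_sigma']
  refine sum_nbij' (fun g => ⟨g 0, Fin.tail g⟩) (fun p => Fin.cons p.1 p.2) ?_ ?_ ?_ ?_ ?_
  · intro g hg
    rw [← Fin.cons_self_tail g, cons_mem_orderedPartitions_succ] at hg
    simpa [hg.1, hg.2.1] using hg.2.2
  · rintro ⟨T, g⟩ hTg
    simp only [mem_sigma, mem_erase, mem_powerset] at hTg
    exact cons_mem_orderedPartitions_succ.mpr ⟨hTg.1.2, hTg.1.1, hTg.2⟩
  · intro g _; exact Fin.cons_self_tail g
  · rintro ⟨T, g⟩ _; simp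
  · intro g _; rw [Fin.cons_self_tail]

theorem card_orderedPartitions_succ :
    #(orderedPartitions S (k + 1)) = ∑ T ∈ S.powerset.erase ∅, #(orderedPartitions (S \ T) k) := by
  simp only [card_eq_sum_ones, sum_orderedPartitions_succ]

theorem sum_orderedPartitions_sum_apply {R : Type*} [CommSemiring R] (φ : Finset α → R) :
    ∑ g ∈ orderedPartitions S (k + 1), ∑ j, φ (g j) =
      (k + 1) * ∑ T ∈ S.powerset.erase ∅, #(orderedPartitions (S \ T) k) * φ T := by
  have hsymm (j : Fin (k + 1)) :
      ∑ g ∈ orderedPartitions S (k + 1), φ (g j) = ∑ g ∈ orderedPartitions S (k + 1), φ (g 0) := by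
    simpa using sum_orderedPartitions_comp_perm (Equiv.swap 0 j) fun g => φ (g 0)
  rw [sum_comm, sum_congr rfl fun j _ => hsymm j, sum_const, card_univ, Fintype.card_fin,
    nsmul_eq_mul, sum_orderedPartitions_succ]
  simp [nsmul_eq_mul]

theorem sum_range_neg_one_pow_mul_card_orderedPartitions {R : Type*} [CommRing R]
    (M : Finset α) {n : ℕ} (hn : #M < n) :
    ∑ k ∈ range n, (-1 : R) ^ k * #(orderedPartitions M k) = (-1) ^ #M := by
  induction M using Finset.strongInduction generalizing n with
  | H M ih =>
    obtain ⟨n, rfl⟩ : ∃ m, n = m + 1 := ⟨n - 1, by omega⟩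
    have hpeel (k : ℕ) : (-1 : R) ^ (k + 1) * #(orderedPartitions M (k + 1)) =
        -∑ T ∈ M.powerset.erase ∅, (-1 : R) ^ k * #(orderedPartitions (M \ T) k) := by
      rw [card_orderedPartitions_succ, Nat.cast_sum, mul_sum, ← sum_neg_distrib]
      exact sum_congr rfl fun _ _ => by ring
    have hsub (T) (hT : T ∈ M.powerset.erase ∅) :
        ∑ k ∈ range n, (-1 : R) ^ k * #(orderedPartitions (M \ T) k) = (-1) ^ #M * (-1) ^ #T := by
      obtain ⟨hT, hTM⟩ := mem_erase.mp hT
      rw [mem_powerset] at hTM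
      have hlt : M \ T ⊂ M := sdiff_ssubset hTM (nonempty_iff_ne_empty.mpr hT)
      rw [ih _ hlt (by have := card_lt_card hlt; omega), neg_one_pow_card_sdiff hTM]
    rw [sum_range_succ', card_orderedPartitions_zero]
    simp only [hpeel, sum_neg_distrib]
    rw [sum_comm, sum_congr rfl hsub, ← mul_sum]
    by_cases hM : M = ∅
    · subst hM
      simp
    · have h := sum_powerset_neg_one_pow_card_mul_sum_pow M (fun _ => (0 : R)) (m := 0)
        (card_pos.mpr (nonempty_iff_ne_empty.mpr hM))
      simp only [pow_zero, mul_one] at h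
      rw [sum_erase_eq_sub (empty_mem_powerset M), h, if_neg hM]
      simp

end OrderedPartitions

theorem Finset.Nat.antidiagonalTuple_one_right (r : ℕ) :
    Finset.Nat.antidiagonalTuple r 1 = univ.image fun j => Pi.single j 1 := by
  ext h
  simp only [Finset.Nat.mem_antidiagonalTuple, mem_image, mem_univ, true_and]
  constructor
  · intro hsum
    obtain ⟨j, -, hj⟩ := exists_ne_zero_of_sum_ne_zero (s := univ) (by omega : ∑ i, h i ≠ 0)
    have hrest := add_sum_erase univ h (mem_univ j)
    have hzero := sum_eq_zero_iff.mp (by omega : ∑ i ∈ univ.erase j, h i = 0)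
    refine ⟨j, funext fun i => ?_⟩
    by_cases hij : i = j
    · subst hij; simp; omega
    · simp [hij, hzero i (mem_erase.mpr ⟨hij, mem_univ i⟩)]
  · rintro ⟨j, rfl⟩
    simp

theorem sum_antidiagonalTuple_one_right_prod {R : Type*} [CommSemiring R] {r : ℕ}
    (f : Fin r → ℕ → R) (hf : ∀ i, f i 0 = 1) :
    ∑ h ∈ Finset.Nat.antidiagonalTuple r 1, ∏ i, f i (h i) = ∑ j, f j 1 := by
  rw [Finset.Nat.antidiagonalTuple_one_right, sum_image fun i _ j _ hij => by
    simpa [Pi.single_apply, eq_comm] using congrFun hij i]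
  refine sum_congr rfl fun j _ => ?_
  rw [prod_eq_single j (fun i _ hij => by simp [hij, hf]) (by simp)]
  simp

theorem univ_biUnion_eq_iff {α ι : Type*} [DecidableEq α] [Fintype ι] {S : Finset α}
    {g : ι → Finset α} : univ.biUnion g = S ↔ (∀ i, g i ⊆ S) ∧ ∀ x ∈ S, ∃ i, x ∈ g i := by
  rw [subset_antisymm_iff, biUnion_subset]
  simp [subset_iff]

theorem weightedConfigSum_eq_sum_orderedPartitions (P : ℕ → ℝ[X]) (S : Finset ℝ) (w : ℕ) :
    weightedConfigSum P S w = ∑ r ∈ range (#S + 1), (-1 : ℝ) ^ r * (1 / r) *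
      ∑ g ∈ orderedPartitions S r, ∑ h ∈ Finset.Nat.antidiagonalTuple r w,
        ∏ i, (P (h i)).eval (∑ c ∈ g i, c) := by
  refine sum_congr rfl fun r _ => ?_
  rw [← sum_product', mul_sum]
  refine sum_nbij' (fun f => (Prod.fst ∘ f, Prod.snd ∘ f)) (fun p i => (p.1 i, p.2 i))
    ?_ ?_ (fun _ _ => rfl) (fun _ _ => rfl) (fun _ _ => rfl)
  · intro f hf
    simp only [mem_filter, Fintype.mem_piFinset, mem_product, mem_powerset, mem_range,
      univ_biUnion_eq_iff] at hf
    obtain ⟨-, hne, hdisj, ⟨hsub, hcover⟩, hsum⟩ := hf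
    simp only [mem_product, mem_orderedPartitions, Finset.Nat.mem_antidiagonalTuple, comp_apply]
    exact ⟨⟨hsub, hne, fun i j hij => hdisj i j hij, hcover⟩, hsum⟩
  · rintro ⟨g, h⟩ hgh
    simp only [mem_product, mem_orderedPartitions, Finset.Nat.mem_antidiagonalTuple] at hgh
    obtain ⟨⟨hsub, hne, hdisj, hcover⟩, hsum⟩ := hgh
    simp only [mem_filter, Fintype.mem_piFinset, mem_product, mem_powerset, mem_range,
      univ_biUnion_eq_iff]
    refine ⟨fun i => ⟨hsub i, ?_⟩, hne, fun i j hij => hdisj hij, ⟨hsub, hcover⟩, hsum⟩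
    exact Nat.lt_succ_of_le (hsum ▸ single_le_sum (fun _ _ => Nat.zero_le _) (mem_univ i))

theorem weightedConfigSum_one_eq {P : ℕ → ℝ[X]} (hP0 : P 0 = 1) (S : Finset ℝ) :
    weightedConfigSum P S 1 =
      -(-1) ^ #S * ∑ T ∈ S.powerset.erase ∅, (-1) ^ #T * (P 1).eval (∑ c ∈ T, c) := by
  set φ : Finset ℝ → ℝ := fun T => (P 1).eval (∑ c ∈ T, c)
  have hterm (k : ℕ) : (-1 : ℝ) ^ (k + 1) * (1 / ↑(k + 1)) *
      ∑ g ∈ orderedPartitions S (k + 1), ∑ h ∈ Finset.Nat.antidiagonalTuple (k + 1) 1,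
        ∏ i, (P (h i)).eval (∑ c ∈ g i, c) =
      ∑ T ∈ S.powerset.erase ∅, (-1) ^ (k + 1) * #(orderedPartitions (S \ T) k) * φ T := by
    rw [sum_congr rfl fun g _ => sum_antidiagonalTuple_one_right_prod
        (fun i n => (P n).eval (∑ c ∈ g i, c)) fun i => by simp [hP0],
      sum_orderedPartitions_sum_apply φ, mul_sum, mul_sum]
    refine sum_congr rfl fun T _ => ?_
    push_cast
    field_simp
  have hcount (T) (hT : T ∈ S.powerset.erase ∅) :
      ∑ k ∈ range #S, (-1 : ℝ) ^ (k + 1) * #(orderedPartitions (S \ T) k) =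
        -((-1) ^ #S * (-1) ^ #T) := by
    obtain ⟨hT, hTS⟩ := mem_erase.mp hT
    rw [mem_powerset] at hTS
    simp only [pow_succ, mul_neg_one, neg_mul, sum_neg_distrib]
    rw [sum_range_neg_one_pow_mul_card_orderedPartitions _
      (card_lt_card (sdiff_ssubset hTS (nonempty_iff_ne_empty.mpr hT))), neg_one_pow_card_sdiff hTS]
  calc weightedConfigSum P S 1
      = ∑ k ∈ range #S, ∑ T ∈ S.powerset.erase ∅,
          (-1) ^ (k + 1) * #(orderedPartitions (S \ T) k) * φ T := by
        rw [weightedConfigSum_eq_sum_orderedPartitions, sum_range_succ',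
          sum_congr rfl fun k _ => hterm k, Nat.cast_zero, div_zero, mul_zero, zero_mul, add_zero]
    _ = ∑ T ∈ S.powerset.erase ∅, -((-1) ^ #S * (-1) ^ #T) * φ T := by
        rw [sum_comm]
        exact sum_congr rfl fun T hT => by rw [← hcount T hT, sum_mul]
    _ = -(-1) ^ #S * ∑ T ∈ S.powerset.erase ∅, (-1) ^ #T * φ T := by
        rw [mul_sum]
        exact sum_congr rfl fun T _ => by ring

theorem weightedConfigSum_one_eq_zero {P : ℕ → ℝ[X]} (hP : IsStirlingPoly P) {S : Finset ℝ}
    (hS : 3 ≤ #S) : weightedConfigSum P S 1 = 0 := by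
  have hP1 : (P 1).natDegree < #S := by have := (hP 1).1; omega
  rw [weightedConfigSum_one_eq hP.zero_eq, sum_erase _ (by simp [hP.one_eq]),
    sum_powerset_neg_one_pow_card_mul_eval_sum S (fun c => c) hP1, mul_zero]

theorem weighted_config_identity_g7_w1 (P : ℕ → Polynomial ℝ) (hP : IsStirlingPoly P)
    (S : Finset ℝ) (hS : S.card = 7) :
    weightedConfigSum P S 1 = 0 :=
  weightedConfigSum_one_eq_zero hP (by omega)
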